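/- arXiv:2103.02712 — 5 statements merged into one kernel-verified Lean document; each statement's English description precedes it below -/
import Mathlib

section
/- Let E be a directed graph, H a hereditary subset of E⁰, and S ⊆ H ∪ B_H. If a vertex v lying on a cycle of E belongs to the S-saturation of H, then v ∈ H. -/
/-- A directed graph: vertices, edges, and source/range maps. -/
structure DGraph where
  V : Type
  E : Type
  src : E → V
  rng : E → V

namespace DGraph

variable (G : DGraph)

/-- A subset of vertices is hereditary if ranges of edges emitted from it stay in it. -/
def Hereditary (H : Set G.V) : Prop := ∀ e : G.E, G.src e ∈ H → G.rng e ∈ H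

/-- A vertex is regular if it emits a nonzero finite number of edges. -/
def Regular (v : G.V) : Prop :=
  {e : G.E | G.src e = v}.Finite ∧ {e : G.E | G.src e = v}.Nonempty

/-- A vertex is singular if it is a sink or an infinite emitter. -/
def Singular (v : G.V) : Prop := ¬ Regular G v

/-- A vertex emitting infinitely many edges. -/
def InfEmitter (v : G.V) : Prop := {e : G.E | G.src e = v}.Infinite

/-- A subset is saturated if it contains every regular vertex all of whose
emitted edges have range in the subset. -/
def Saturated (H : Set G.V) : Prop :=
  ∀ v : G.V, Regular G v → (∀ e : G.E, G.src e = v → G.rng e ∈ H) → v ∈ H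

/-- A breaking vertex for a hereditary set `H`. -/
def Breaking (H : Set G.V) (v : G.V) : Prop :=
  InfEmitter G v ∧ v ∉ H ∧
    {e : G.E | G.src e = v ∧ G.rng e ∉ H}.Finite ∧
    {e : G.E | G.src e = v ∧ G.rng e ∉ H}.Nonempty

/-- `X` contains `H`, is hereditary saturated, and absorbs vertices of `S`
all of whose emitted edges have range in `X`. -/
def SClosed (H S X : Set G.V) : Prop :=
  H ⊆ X ∧ Hereditary G X ∧ Saturated G X ∧
    ∀ v ∈ S, (∀ e : G.E, G.src e = v → G.rng e ∈ X) → v ∈ X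

/-- The `S`-saturation of `H`: the smallest `SClosed` set. -/
def SSat (H S : Set G.V) : Set G.V := ⋂₀ {X | SClosed G H S X}

end DGraph

/-!
Every vertex `v` on a cycle emits an edge from whose range `v` can be reached again. If such a
`v` were not in `H`, the set of vertices from which `v` is unreachable would contain `H` (because
`H` is hereditary), be hereditary, and absorb every vertex all of whose edges end in it: a vertex
reaching `v` is either `v` itself or has an edge whose range reaches `v`, and in both cases some
edge from it ends outside the set. This set is then `S`-closed for any `S` and misses `v`, so `v`
is not in the `S`-saturation of `H`.
-/

namespace DGraph

open Relation

variable {G : DGraph}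

def Adj (G : DGraph) (u w : G.V) : Prop := ∃ e : G.E, G.src e = u ∧ G.rng e = w

theorem adj_src_rng (e : G.E) : G.Adj (G.src e) (G.rng e) := ⟨e, rfl, rfl⟩

theorem Hereditary.mem_of_reflTransGen {H : Set G.V} (hH : G.Hereditary H) {u w : G.V}
    (hu : u ∈ H) (huw : ReflTransGen G.Adj u w) : w ∈ H := by
  induction huw with
  | refl => exact hu
  | tail _ hxy ih =>
    obtain ⟨e, rfl, rfl⟩ := hxy
    exact hH e ih

theorem SSat_subset {H S X : Set G.V} (hX : G.SClosed H S X) : G.SSat H S ⊆ X :=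
  Set.sInter_subset_of_mem hX

theorem exists_edge_reaching_of_reflTransGen {u v : G.V} {e₀ : G.E} (he₀ : G.src e₀ = v)
    (hret : ReflTransGen G.Adj (G.rng e₀) v) (huv : ReflTransGen G.Adj u v) :
    ∃ e : G.E, G.src e = u ∧ ReflTransGen G.Adj (G.rng e) v := by
  induction huv using ReflTransGen.head_induction_on with
  | refl => exact ⟨e₀, he₀, hret⟩
  | head hadj hrest =>
    obtain ⟨e, rfl, rfl⟩ := hadj
    exact ⟨e, rfl, hrest⟩

theorem sClosed_setOf_not_reflTransGen {H S : Set G.V} (hH : G.Hereditary H) {v : G.V}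
    (hvH : v ∉ H) {e₀ : G.E} (he₀ : G.src e₀ = v)
    (hret : ReflTransGen G.Adj (G.rng e₀) v) :
    G.SClosed H S {w | ¬ ReflTransGen G.Adj w v} := by
  have absorb : ∀ u : G.V, (∀ e : G.E, G.src e = u → ¬ ReflTransGen G.Adj (G.rng e) v) →
      ¬ ReflTransGen G.Adj u v := fun u hu huv => by
    obtain ⟨e, he, hreach⟩ := exists_edge_reaching_of_reflTransGen he₀ hret huv
    exact hu e he hreach
  exact ⟨fun h hh hreach => hvH (hH.mem_of_reflTransGen hh hreach),
    fun e hsrc hrng => hsrc (.head (adj_src_rng e) hrng),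
    fun u _ hu => absorb u hu, fun u _ hu => absorb u hu⟩

theorem mem_of_mem_SSat_of_reflTransGen_rng_src {H S : Set G.V} (hH : G.Hereditary H)
    {e : G.E} (hret : ReflTransGen G.Adj (G.rng e) (G.src e))
    (hmem : G.src e ∈ G.SSat H S) : G.src e ∈ H := by
  by_contra hvH
  exact SSat_subset (sClosed_setOf_not_reflTransGen hH hvH rfl hret) hmem .refl

section Cycle

variable {L : List G.E} (hchain : L.IsChain (fun e f => G.rng e = G.src f)) (hL : L ≠ [])
include hchain

theorem reflTransGen_src_head_src {e : G.E} (he : e ∈ L) :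
    ReflTransGen G.Adj (G.src (L.head hL)) (G.src e) :=
  hchain.induction (fun f => ReflTransGen G.Adj (G.src (L.head hL)) (G.src f)) L
    (fun f _ hfg hf => hf.tail (hfg ▸ adj_src_rng f)) (fun _ => .refl) e he

theorem reflTransGen_rng_rng_getLast {e : G.E} (he : e ∈ L) :
    ReflTransGen G.Adj (G.rng e) (G.rng (L.getLast hL)) :=
  hchain.backwards_induction (fun f => ReflTransGen G.Adj (G.rng f) (G.rng (L.getLast hL)))
    L (fun _ g hfg hg => .head (hfg ▸ adj_src_rng g) hg) (fun _ => .refl) e he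

theorem reflTransGen_rng_src_of_mem_cycle
    (hclosed : G.rng (L.getLast hL) = G.src (L.head hL)) {e : G.E} (he : e ∈ L) :
    ReflTransGen G.Adj (G.rng e) (G.src e) :=
  (reflTransGen_rng_rng_getLast hchain hL he).trans
    (hclosed ▸ reflTransGen_src_head_src hchain hL he)

end Cycle

end DGraph

theorem mem_SSat_of_on_cycle_general (G : DGraph) (H S : Set G.V)
    (hH : DGraph.Hereditary G H)
    (L : List G.E) (hL : L ≠ [])
    (hchain : L.Chain' (fun e f => G.rng e = G.src f))
    (hclosed : G.rng (L.getLast hL) = G.src (L.head hL))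
    (v : G.V) (hv : v ∈ L.map G.src)
    (hmem : v ∈ DGraph.SSat G H S) :
    v ∈ H := by
  obtain ⟨e, he, rfl⟩ := List.mem_map.1 hv
  exact DGraph.mem_of_mem_SSat_of_reflTransGen_rng_src hH
    (DGraph.reflTransGen_rng_src_of_mem_cycle hchain hL hclosed he) hmem

/-- a vertex lying on a cycle that belongs to the `S`-saturation of `H`
must already lie in `H`.  A cycle is a nonempty closed chain of edges whose source
vertices are pairwise distinct. -/
theorem mem_SSat_of_on_cycle (G : DGraph) (H S : Set G.V)
    (hH : DGraph.Hereditary G H)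
    (hS : S ⊆ H ∪ {v : G.V | DGraph.Breaking G H v})
    (L : List G.E) (hL : L ≠ [])
    (hchain : L.Chain' (fun e f => G.rng e = G.src f))
    (hclosed : G.rng (L.getLast hL) = G.src (L.head hL))
    (hnodup : (L.map G.src).Nodup)
    (v : G.V) (hv : v ∈ L.map G.src)
    (hmem : v ∈ DGraph.SSat G H S) :
    v ∈ H :=
  mem_SSat_of_on_cycle_general G H S hH L hL hchain hclosed v hv hmem
end

section
/- Let E be a directed graph and {(Hᵢ,Sᵢ)}ᵢ∈I an arbitrary family of admissible pairs of E. Let H' = the (⋃ᵢSᵢ)-saturation of ⋃ᵢHᵢ and S' = (⋃ᵢSᵢ) ∖ H'. Then (H', S') is an admissible pair and it is the least upper bound of the family in the lattice 𝒯_E of admissible pairs. -/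
namespace DGraph

variable (G : DGraph)

/-- An admissible pair: a hereditary saturated set of vertices together with a
set of breaking vertices for it. -/
structure APair (G : DGraph) where
  H : Set G.V
  S : Set G.V
  hered : Hereditary G H
  sat : Saturated G H
  brk : ∀ v ∈ S, Breaking G H v

/-- The order on admissible pairs: `(H₁,S₁) ≤ (H₂,S₂)` iff `H₁ ⊆ H₂` and `S₁ ⊆ H₂ ∪ S₂`. -/
def APle (P Q : APair G) : Prop := P.H ⊆ Q.H ∧ P.S ⊆ Q.H ∪ Q.S

end DGraph

namespace DGraph

/-- `Q` is the least upper bound of the family `P` of admissible pairs. -/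
def IsSupFam {ι : Type} (G : DGraph) (P : ι → APair G) (Q : APair G) : Prop :=
  (∀ i, APle G (P i) Q) ∧ ∀ R : APair G, (∀ i, APle G (P i) R) → APle G Q R

end DGraph



namespace DGraph

lemma sclosed_sInter (G : DGraph) (H S : Set G.V) : SClosed G H S (SSat G H S) := by
  refine ⟨?_, ?_, ?_, ?_⟩
  · intro v hv
    exact Set.mem_sInter.2 fun X hX => hX.1 hv
  · intro e he
    exact Set.mem_sInter.2 fun X hX => hX.2.1 e (Set.mem_sInter.1 he X hX)
  · intro v hreg h
    exact Set.mem_sInter.2 fun X hX =>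
      hX.2.2.1 v hreg (fun e hse => Set.mem_sInter.1 (h e hse) X hX)
  · intro v hv h
    exact Set.mem_sInter.2 fun X hX =>
      hX.2.2.2 v hv (fun e hse => Set.mem_sInter.1 (h e hse) X hX)

lemma ssat_subset (G : DGraph) {H S X : Set G.V} (hX : SClosed G H S X) :
    SSat G H S ⊆ X :=
  fun v hv => Set.mem_sInter.1 hv X hX

end DGraph

/-- for any family of admissible pairs, the pair whose first
component is the `(⋃ᵢSᵢ)`-saturation `H'` of `⋃ᵢHᵢ` and whose second component
is `(⋃ᵢSᵢ) ∖ H'` is an admissible pair and is the least upper bound of the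
family in the lattice of admissible pairs. -/
theorem supFam_admissiblePairs (G : DGraph) {ι : Type} (P : ι → DGraph.APair G) :
    ∃ Q : DGraph.APair G,
      Q.H = DGraph.SSat G (⋃ i, (P i).H) (⋃ i, (P i).S) ∧
      Q.S = (⋃ i, (P i).S) \ DGraph.SSat G (⋃ i, (P i).H) (⋃ i, (P i).S) ∧
      DGraph.IsSupFam G P Q := by
  classical
  set H0 := ⋃ i, (P i).H with hH0
  set S0 := ⋃ i, (P i).S with hS0
  set H' := DGraph.SSat G H0 S0 with hH'
  obtain ⟨hsub, hher, hsat, habs⟩ := DGraph.sclosed_sInter G H0 S0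
  have hHiH' : ∀ i, (P i).H ⊆ H' := fun i x hx => hsub (Set.mem_iUnion.2 ⟨i, hx⟩)
  refine ⟨⟨H', S0 \ H', hher, hsat, ?_⟩, rfl, rfl, ?_, ?_⟩
  · rintro v ⟨hvS0, hvH'⟩
    obtain ⟨i, hvi⟩ := Set.mem_iUnion.1 hvS0
    obtain ⟨hinf, hni, hfin, hne⟩ := (P i).brk v hvi
    refine ⟨hinf, hvH', ?_, ?_⟩
    · exact hfin.subset (fun e ⟨h1, h2⟩ => ⟨h1, fun h => h2 (hHiH' i h)⟩)
    · by_contra hcon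
      rw [Set.not_nonempty_iff_eq_empty] at hcon
      have : ∀ e : G.E, G.src e = v → G.rng e ∈ H' := by
        intro e hse
        by_contra hr
        exact (Set.eq_empty_iff_forall_notMem.1 hcon e ⟨hse, hr⟩).elim
      exact hvH' (habs v hvS0 this)
  · intro i
    refine ⟨hHiH' i, fun v hv => ?_⟩
    by_cases h : v ∈ H'
    · exact Or.inl h
    · exact Or.inr ⟨Set.mem_iUnion.2 ⟨i, hv⟩, h⟩
  · intro R hR
    have hRH : H' ⊆ R.H := by
      apply DGraph.ssat_subset G
      refine ⟨?_, R.hered, R.sat, ?_⟩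
      · exact Set.iUnion_subset fun i => (hR i).1
      · intro v hv hall
        obtain ⟨i, hvi⟩ := Set.mem_iUnion.1 hv
        rcases (hR i).2 hvi with h | h
        · exact h
        · obtain ⟨_, _, _, e, hse, hre⟩ := R.brk v h
          exact absurd (hall e hse) hre
    refine ⟨hRH, ?_⟩
    rintro v ⟨hvS0, _⟩
    obtain ⟨i, hvi⟩ := Set.mem_iUnion.1 hvS0
    exact (hR i).2 hvi
end

section
/- Let E be a directed graph. For admissible pairs, the pair ( H₁ ∩ H₂ , (S₁ ∩ S₂) ∪ ((S₁ ∪ S₂) ∩ (H₁ ∪ H₂)) ) is an admissible pair and is the greatest lower bound of (H₁,S₁) and (H₂,S₂) in the lattice 𝒯_E of admissible pairs. -/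
lemma brkAux (G : DGraph) (P₁ P₂ : DGraph.APair G) (v : G.V)
    (h1 : v ∈ P₁.S) (h2 : v ∈ P₂.H) : DGraph.Breaking G (P₁.H ∩ P₂.H) v := by
  obtain ⟨hi, hn1, hf1, hne1⟩ := P₁.brk v h1
  have hset : {e : G.E | G.src e = v ∧ G.rng e ∉ P₁.H ∩ P₂.H} =
      {e | G.src e = v ∧ G.rng e ∉ P₁.H} := by
    ext e
    constructor
    · rintro ⟨hs, hr⟩
      exact ⟨hs, fun h => hr ⟨h, P₂.hered e (hs ▸ h2)⟩⟩
    · rintro ⟨hs, hr⟩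
      exact ⟨hs, fun h => hr h.1⟩
  exact ⟨hi, fun h => hn1 h.1, hset ▸ hf1, hset ▸ hne1⟩

/-- `(H₁ ∩ H₂, (S₁ ∩ S₂) ∪ ((S₁ ∪ S₂) ∩ (H₁ ∪ H₂)))` is an admissible
pair and is the greatest lower bound of `(H₁,S₁)` and `(H₂,S₂)`. -/
theorem infPair_admissiblePairs (G : DGraph) (P₁ P₂ : DGraph.APair G) :
    ∃ Q : DGraph.APair G,
      Q.H = P₁.H ∩ P₂.H ∧
      Q.S = (P₁.S ∩ P₂.S) ∪ ((P₁.S ∪ P₂.S) ∩ (P₁.H ∪ P₂.H)) ∧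
      DGraph.APle G Q P₁ ∧ DGraph.APle G Q P₂ ∧
      ∀ R : DGraph.APair G, DGraph.APle G R P₁ → DGraph.APle G R P₂ →
        DGraph.APle G R Q := by
  have hered : DGraph.Hereditary G (P₁.H ∩ P₂.H) :=
    fun e he => ⟨P₁.hered e he.1, P₂.hered e he.2⟩
  have sat : DGraph.Saturated G (P₁.H ∩ P₂.H) := fun v hv h =>
    ⟨P₁.sat v hv (fun e he => (h e he).1), P₂.sat v hv (fun e he => (h e he).2)⟩
  have brk : ∀ v ∈ (P₁.S ∩ P₂.S) ∪ ((P₁.S ∪ P₂.S) ∩ (P₁.H ∪ P₂.H)),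
      DGraph.Breaking G (P₁.H ∩ P₂.H) v := by
    rintro v (⟨h1, h2⟩ | ⟨(h1 | h2), hH⟩)
    · obtain ⟨hi, hn1, hf1, hne1⟩ := P₁.brk v h1
      obtain ⟨-, hn2, hf2, hne2⟩ := P₂.brk v h2
      refine ⟨hi, fun h => hn1 h.1, ?_, ?_⟩
      · refine (hf1.union hf2).subset ?_
        rintro e ⟨hs, hr⟩
        by_cases h : G.rng e ∈ P₁.H
        · exact Or.inr ⟨hs, fun h2' => hr ⟨h, h2'⟩⟩
        · exact Or.inl ⟨hs, h⟩
      · obtain ⟨e, hs, hr⟩ := hne1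
        exact ⟨e, hs, fun h => hr h.1⟩
    · have hn1 := (P₁.brk v h1).2.1
      have h2 : v ∈ P₂.H := hH.resolve_left hn1
      exact brkAux G P₁ P₂ v h1 h2
    · have hn2 := (P₂.brk v h2).2.1
      have h1 : v ∈ P₁.H := hH.resolve_right hn2
      have := brkAux G P₂ P₁ v h2 h1
      rwa [Set.inter_comm] at this
  refine ⟨⟨P₁.H ∩ P₂.H, _, hered, sat, brk⟩, rfl, rfl, ?_, ?_, ?_⟩
  · refine ⟨Set.inter_subset_left, ?_⟩
    rintro v (⟨h1, h2⟩ | ⟨(h1 | h2), hH⟩)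
    · exact Or.inr h1
    · exact Or.inr h1
    · exact Or.inl (hH.resolve_right (P₂.brk v h2).2.1)
  · refine ⟨Set.inter_subset_right, ?_⟩
    rintro v (⟨h1, h2⟩ | ⟨(h1 | h2), hH⟩)
    · exact Or.inr h2
    · exact Or.inl (hH.resolve_left (P₁.brk v h1).2.1)
    · exact Or.inr h2
  · rintro R ⟨hH1, hS1⟩ ⟨hH2, hS2⟩
    refine ⟨fun v hv => ⟨hH1 hv, hH2 hv⟩, ?_⟩
    intro v hv
    rcases hS1 hv with h1 | h1 <;> rcases hS2 hv with h2 | h2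
    · exact Or.inl ⟨h1, h2⟩
    · exact Or.inr (Or.inr ⟨Or.inr h2, Or.inl h1⟩)
    · exact Or.inr (Or.inr ⟨Or.inl h1, Or.inr h2⟩)
    · exact Or.inr (Or.inl ⟨h1, h2⟩)
end

section
/- Let f : 𝒯_E* → ℒ(R) be an order-reversing function. Then the saturation f̄ of f is given by f̄(H,S) = ⋃ over all families A ⊆ 𝒯_E* with ⋁_{α∈A}(H_α,S_α) = (H,S) of ⋂_{α∈A} f(H_α,S_α); in particular this union of ideals is itself an ideal of R. -/
namespace DGraph

/-- An admissible pair is nontrivial if it is not `(∅, ∅)`; nontrivial pairs form `𝒯_E*`. -/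
def Nontriv (G : DGraph) (P : APair G) : Prop := ¬ (P.H = ∅ ∧ P.S = ∅)

/-- A saturated function `𝒯_E* → ℒ(R)`: it sends suprema of (nonempty) families of
nontrivial admissible pairs to intersections of ideals. -/
def SatFun (G : DGraph) (R : Type) [CommRing R] (f : APair G → Ideal R) : Prop :=
  ∀ (ι : Type) [Nonempty ι] (P : ι → APair G) (Q : APair G),
    (∀ i, Nontriv G (P i)) → Nontriv G Q → IsSupFam G P Q →
      f Q = ⨅ i, f (P i)

end DGraph

namespace DGraph

/-- `Q` is the least upper bound of the set `A` of admissible pairs. -/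
def IsSupSet (G : DGraph) (A : Set (APair G)) (Q : APair G) : Prop :=
  (∀ P ∈ A, APle G P Q) ∧ ∀ R : APair G, (∀ P ∈ A, APle G P R) → APle G Q R

end DGraph

namespace SatAux

open DGraph

variable (G : DGraph)

/-! ### Basic lemmas about `SSat` -/

lemma mem_ssat {H S : Set G.V} {v : G.V} :
    v ∈ SSat G H S ↔ ∀ X, SClosed G H S X → v ∈ X := by
  simp [SSat, Set.mem_sInter, Set.mem_setOf_eq]

lemma ssat_subset {H S X : Set G.V} (hX : SClosed G H S X) : SSat G H S ⊆ X :=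
  Set.sInter_subset_of_mem hX

lemma sclosed_ssat (H S : Set G.V) : SClosed G H S (SSat G H S) := by
  refine ⟨?_, ?_, ?_, ?_⟩
  · intro v hv
    rw [mem_ssat]
    intro X hX
    exact hX.1 hv
  · intro e he
    rw [mem_ssat] at he ⊢
    intro X hX
    exact hX.2.1 e (he X hX)
  · intro v hreg hall
    rw [mem_ssat]
    intro X hX
    exact hX.2.2.1 v hreg (fun e he => (mem_ssat G).mp (hall e he) X hX)
  · intro v hv hall
    rw [mem_ssat]
    intro X hX
    exact hX.2.2.2 v hv (fun e he => (mem_ssat G).mp (hall e he) X hX)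

/-! ### Order lemmas -/

lemma aple_refl (P : APair G) : APle G P P :=
  ⟨subset_rfl, Set.subset_union_right⟩

lemma aple_trans {P Q R : APair G} (h1 : APle G P Q) (h2 : APle G Q R) : APle G P R := by
  refine ⟨h1.1.trans h2.1, ?_⟩
  intro v hv
  rcases h1.2 hv with h | h
  · exact Or.inl (h2.1 h)
  · exact h2.2 h

lemma aple_of_trivial {P R : APair G} (h : ¬ Nontriv G P) : APle G P R := by
  rw [Nontriv, not_not] at h
  constructor
  · rw [h.1]; exact Set.empty_subset _
  · rw [h.2]; exact Set.empty_subset _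

/-- The bottom admissible pair. -/
def botp : APair G where
  H := ∅
  S := ∅
  hered := fun e he => he.elim
  sat := fun v hreg hall => by
    obtain ⟨e, he⟩ := hreg.2
    exact (hall e he).elim
  brk := fun v hv => hv.elim

lemma triv_of_supset_empty {Q : APair G} (h : IsSupSet G ∅ Q) : ¬ Nontriv G Q := by
  have := h.2 (botp G) (fun P hP => hP.elim)
  rw [Nontriv, not_not]
  constructor
  · exact Set.subset_empty_iff.mp this.1
  · have h2 := this.2
    simp only [botp, Set.union_empty] at h2
    exact Set.subset_empty_iff.mp h2

/-! ### Meets -/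

/-- The meet of two admissible pairs. -/
def meet (P Q : APair G) : APair G where
  H := P.H ∩ Q.H
  S := {v | v ∈ P.H ∪ P.S ∧ v ∈ Q.H ∪ Q.S ∧ Breaking G (P.H ∩ Q.H) v}
  hered := fun e he => ⟨P.hered e he.1, Q.hered e he.2⟩
  sat := fun v hreg h =>
    ⟨P.sat v hreg (fun e he => (h e he).1), Q.sat v hreg (fun e he => (h e he).2)⟩
  brk := fun _ hv => hv.2.2

lemma meet_le_left (P Q : APair G) : APle G (meet G P Q) P :=
  ⟨Set.inter_subset_left, fun _ hv => hv.1⟩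

lemma meet_le_right (P Q : APair G) : APle G (meet G P Q) Q :=
  ⟨Set.inter_subset_right, fun _ hv => hv.2.1⟩

/-- `b.H ∩ a.S` vertices belong to the meet's breaking set. -/
lemma meet_S_of_H_S {b a : APair G} {v : G.V} (hvb : v ∈ b.H) (hva : v ∈ a.S) :
    v ∈ (meet G b a).S := by
  obtain ⟨inf, hnH, fin, ne⟩ := a.brk v hva
  refine ⟨Or.inl hvb, Or.inr hva, inf, fun h => hnH h.2, ?_, ?_⟩
  · refine fin.subset ?_
    rintro e ⟨hs, hm⟩
    refine ⟨hs, fun ha' => hm ⟨?_, ha'⟩⟩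
    exact b.hered e (hs.symm ▸ hvb)
  · obtain ⟨e, hs, hr⟩ := ne
    exact ⟨e, hs, fun h => hr h.2⟩

/-- `b.S ∩ a.H` vertices belong to the meet's breaking set. -/
lemma meet_S_of_S_H {b a : APair G} {v : G.V} (hvb : v ∈ b.S) (hva : v ∈ a.H) :
    v ∈ (meet G b a).S := by
  obtain ⟨inf, hnB, fin, ne⟩ := b.brk v hvb
  refine ⟨Or.inr hvb, Or.inl hva, inf, fun h => hnB h.1, ?_, ?_⟩
  · refine fin.subset ?_
    rintro e ⟨hs, hm⟩
    refine ⟨hs, fun hb' => hm ⟨hb', ?_⟩⟩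
    exact a.hered e (hs.symm ▸ hva)
  · obtain ⟨e, hs, hr⟩ := ne
    exact ⟨e, hs, fun h => hr h.1⟩

/-- `b.S ∩ a.S` vertices belong to the meet's breaking set. -/
lemma meet_S_of_S_S {b a : APair G} {v : G.V} (hvb : v ∈ b.S) (hva : v ∈ a.S) :
    v ∈ (meet G b a).S := by
  obtain ⟨infb, hnB, finb, neb⟩ := b.brk v hvb
  obtain ⟨infa, hnH, fina, nea⟩ := a.brk v hva
  refine ⟨Or.inr hvb, Or.inr hva, infb, fun h => hnB h.1, ?_, ?_⟩
  · refine (finb.union fina).subset ?_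
    rintro e ⟨hs, hm⟩
    by_cases hb' : G.rng e ∈ b.H
    · exact Or.inr ⟨hs, fun ha' => hm ⟨hb', ha'⟩⟩
    · exact Or.inl ⟨hs, hb'⟩
  · obtain ⟨e, hs, hr⟩ := neb
    exact ⟨e, hs, fun h => hr h.1⟩

/-! ### Explicit suprema -/

/-- The explicit supremum of a set of admissible pairs. -/
def supa (A : Set (APair G)) : APair G where
  H := SSat G (⋃ a ∈ A, a.H) (⋃ a ∈ A, a.S)
  S := (⋃ a ∈ A, a.S) \ SSat G (⋃ a ∈ A, a.H) (⋃ a ∈ A, a.S)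
  hered := (sclosed_ssat G _ _).2.1
  sat := (sclosed_ssat G _ _).2.2.1
  brk := by
    rintro v ⟨hv1, hv2⟩
    obtain ⟨a, ha, hva⟩ := Set.mem_iUnion₂.mp hv1
    obtain ⟨inf, hnH, fin, ne⟩ := a.brk v hva
    refine ⟨inf, hv2, ?_, ?_⟩
    · refine fin.subset ?_
      rintro e ⟨hs, hm⟩
      refine ⟨hs, fun h => hm ?_⟩
      exact (sclosed_ssat G _ _).1 (Set.mem_iUnion₂.mpr ⟨a, ha, h⟩)
    · by_contra hne
      apply hv2
      refine (sclosed_ssat G _ _).2.2.2 v hv1 ?_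
      intro e he
      by_contra hre
      exact hne ⟨e, he, hre⟩

lemma supa_isSup (A : Set (APair G)) : IsSupSet G A (supa G A) := by
  constructor
  · intro P hP
    constructor
    · intro v hv
      exact (sclosed_ssat G _ _).1 (Set.mem_iUnion₂.mpr ⟨P, hP, hv⟩)
    · intro v hv
      by_cases h : v ∈ SSat G (⋃ a ∈ A, a.H) (⋃ a ∈ A, a.S)
      · exact Or.inl h
      · exact Or.inr ⟨Set.mem_iUnion₂.mpr ⟨P, hP, hv⟩, h⟩
  · intro R hR
    have hsub : SSat G (⋃ a ∈ A, a.H) (⋃ a ∈ A, a.S) ⊆ R.H := by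
      apply ssat_subset
      refine ⟨?_, R.hered, R.sat, ?_⟩
      · intro v hv
        obtain ⟨a, ha, hva⟩ := Set.mem_iUnion₂.mp hv
        exact (hR a ha).1 hva
      · intro v hv hall
        obtain ⟨a, ha, hva⟩ := Set.mem_iUnion₂.mp hv
        rcases (hR a ha).2 hva with h | h
        · exact h
        · obtain ⟨e, hs, hr⟩ := (R.brk v h).2.2.2
          exact (hr (hall e hs)).elim
    refine ⟨hsub, ?_⟩
    rintro v ⟨hv1, _⟩
    obtain ⟨a, ha, hva⟩ := Set.mem_iUnion₂.mp hv1
    exact (hR a ha).2 hva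

lemma sup_H_eq {A : Set (APair G)} {Q : APair G} (h : IsSupSet G A Q) :
    Q.H = (supa G A).H :=
  subset_antisymm (h.2 _ (supa_isSup G A).1).1 ((supa_isSup G A).2 _ h.1).1

lemma sup_S_sub {A : Set (APair G)} {Q : APair G} (h : IsSupSet G A Q) :
    Q.S ⊆ ⋃ a ∈ A, a.S := by
  intro v hv
  rcases (h.2 _ (supa_isSup G A).1).2 hv with h' | h'
  · exfalso
    have : v ∉ Q.H := (Q.brk v hv).2.1
    rw [sup_H_eq G h] at this
    exact this h'
  · exact h'.1

/-! ### Reachability -/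

/-- Reachability in the graph. -/
def Reach (x y : G.V) : Prop :=
  Relation.ReflTransGen (fun u w => ∃ e, G.src e = u ∧ G.rng e = w) x y

/-! ### The distributivity lemma -/

lemma distrib {A : Set (APair G)} {Q b R : APair G}
    (hA : IsSupSet G A Q) (hb : APle G b Q)
    (hR : ∀ a ∈ A, APle G (meet G b a) R) : APle G b R := by
  set X : Set G.V := {v | v ∈ Q.H ∧ ∀ w, Reach G v w →
    ((w ∈ b.H → w ∈ R.H) ∧ (w ∈ b.S → w ∈ R.H ∪ R.S))} with hX
  have hQH : Q.H = SSat G (⋃ a ∈ A, a.H) (⋃ a ∈ A, a.S) := sup_H_eq G hA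
  have key : Q.H ⊆ X := by
    rw [hQH]
    apply ssat_subset
    refine ⟨?_, ?_, ?_, ?_⟩
    -- generators
    · intro v hv
      obtain ⟨a, ha, hva⟩ := Set.mem_iUnion₂.mp hv
      refine ⟨(hA.1 a ha).1 hva, ?_⟩
      intro w hw
      have hwa : w ∈ a.H := by
        induction hw with
        | refl => exact hva
        | tail _ step ih =>
            obtain ⟨e, hs, hr⟩ := step
            exact hr ▸ a.hered e (hs.symm ▸ ih)
      constructor
      · intro hwb
        exact (hR a ha).1 ⟨hwb, hwa⟩
      · intro hwS
        exact (hR a ha).2 (meet_S_of_S_H G hwS hwa)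
    -- hereditary
    · intro e he
      refine ⟨Q.hered e he.1, ?_⟩
      intro w hw
      exact he.2 w (Relation.ReflTransGen.head ⟨e, rfl, rfl⟩ hw)
    -- saturated
    · intro v hreg hall
      refine ⟨Q.sat v hreg (fun e he => (hall e he).1), ?_⟩
      intro w hw
      rcases hw.cases_head with rfl | ⟨c, ⟨e, hse, hre⟩, hcw⟩
      · constructor
        · intro hvB
          apply R.sat v hreg
          intro e he
          exact ((hall e he).2 (G.rng e) Relation.ReflTransGen.refl).1
            (b.hered e (he.symm ▸ hvB))
        · intro hvS
          exact absurd hreg.1 (b.brk v hvS).1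
      · exact (hall e hse).2 w (hre ▸ hcw)
    -- absorbing
    · intro v hv hall
      obtain ⟨a, ha, hva⟩ := Set.mem_iUnion₂.mp hv
      have hvQH : v ∈ Q.H := by
        rw [hQH]
        exact (sclosed_ssat G _ _).2.2.2 v hv
          (fun e he => hQH ▸ (hall e he).1)
      refine ⟨hvQH, ?_⟩
      intro w hw
      rcases hw.cases_head with rfl | ⟨c, ⟨e, hse, hre⟩, hcw⟩
      · constructor
        · intro hvB
          have hranges : ∀ e, G.src e = v → G.rng e ∈ R.H := by
            intro e he
            exact ((hall e he).2 (G.rng e) Relation.ReflTransGen.refl).1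
              (b.hered e (he.symm ▸ hvB))
          rcases (hR a ha).2 (meet_S_of_H_S G hvB hva) with h | h
          · exact h
          · obtain ⟨e, hs, hr⟩ := (R.brk v h).2.2.2
            exact (hr (hranges e hs)).elim
        · intro hvS
          exact (hR a ha).2 (meet_S_of_S_S G hvS hva)
      · exact (hall e hse).2 w (hre ▸ hcw)
  constructor
  · intro v hv
    exact ((key (hb.1 hv)).2 v Relation.ReflTransGen.refl).1 hv
  · intro v hv
    rcases hb.2 hv with h | h
    · exact ((key h).2 v Relation.ReflTransGen.refl).2 hv
    · obtain ⟨a, ha, hva⟩ := Set.mem_iUnion₂.mp (sup_S_sub G hA h)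
      exact (hR a ha).2 (meet_S_of_S_S G hv hva)

/-! ### The union-of-intersections set -/

section UnionSet

variable {R : Type} [CommRing R] (f : APair G → Ideal R)

/-- The candidate value of the saturation at `P`. -/
def UU (P : APair G) : Set R :=
  ⋃ (A : Set (APair G)) (_ : ∀ P' ∈ A, Nontriv G P') (_ : IsSupSet G A P),
    ((⨅ P' ∈ A, f P' : Ideal R) : Set R)

lemma mem_biInf {A : Set (APair G)} {x : R} :
    x ∈ (⨅ P ∈ A, f P : Ideal R) ↔ ∀ P ∈ A, x ∈ f P := by
  simp [Submodule.mem_iInf]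

lemma mem_UU {P : APair G} {x : R} :
    x ∈ UU G f P ↔ ∃ A : Set (APair G), (∀ P' ∈ A, Nontriv G P') ∧ IsSupSet G A P ∧
      x ∈ (⨅ P' ∈ A, f P' : Ideal R) := by
  simp only [UU, Set.mem_iUnion, SetLike.mem_coe, exists_prop]

lemma singleton_isSup (P : APair G) : IsSupSet G {P} P := by
  constructor
  · intro P' hP'
    rw [Set.mem_singleton_iff] at hP'
    subst hP'
    exact aple_refl G P'
  · intro R' hR'
    exact hR' P rfl

lemma f_subset_UU {P : APair G} (hP : Nontriv G P) : (f P : Set R) ⊆ UU G f P := by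
  intro x hx
  apply (mem_UU G f).mpr
  refine ⟨{P}, ?_, singleton_isSup G P, ?_⟩
  · intro P' hP'
    rw [Set.mem_singleton_iff] at hP'
    subst hP'
    exact hP
  · apply (mem_biInf G f).mpr
    intro P' hP'
    rw [Set.mem_singleton_iff] at hP'
    subst hP'
    exact hx

end UnionSet

end SatAux

/-- the saturation `g` of an order-reversing function `f` is given at
each nontrivial admissible pair `Q` by the union, over all families `A ⊆ 𝒯_E*` with
supremum `Q`, of the ideals `⋂_{P ∈ A} f(P)`; in particular this union is an ideal. -/
theorem saturation_formula {R : Type} [CommRing R] (G : DGraph)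
    (f g : DGraph.APair G → Ideal R)
    (hf : ∀ P Q : DGraph.APair G, DGraph.Nontriv G P → DGraph.Nontriv G Q →
      DGraph.APle G P Q → f Q ≤ f P)
    (hg : DGraph.SatFun G R g)
    (hge : ∀ P, DGraph.Nontriv G P → f P ≤ g P)
    (hmin : ∀ h : DGraph.APair G → Ideal R, DGraph.SatFun G R h →
      (∀ P, DGraph.Nontriv G P → f P ≤ h P) →
      ∀ P, DGraph.Nontriv G P → g P ≤ h P)
    (Q : DGraph.APair G) (hQ : DGraph.Nontriv G Q) :
    (g Q : Set R) =
      ⋃ (A : Set (DGraph.APair G)) (_ : ∀ P ∈ A, DGraph.Nontriv G P)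
        (_ : DGraph.IsSupSet G A Q), ((⨅ P ∈ A, f P : Ideal R) : Set R) := by
  classical
  show (g Q : Set R) = SatAux.UU G f Q
  -- `UU` is an ideal at each nontrivial pair
  have hUideal : ∀ P : DGraph.APair G, DGraph.Nontriv G P →
      ∃ I : Ideal R, (I : Set R) = SatAux.UU G f P := by
    intro P hP
    refine ⟨{ carrier := SatAux.UU G f P
              zero_mem' := ?_
              add_mem' := ?_
              smul_mem' := ?_ }, rfl⟩
    · intro x y hx hy
      obtain ⟨A₁, h1n, h1s, hx1⟩ := (SatAux.mem_UU G f).mp hx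
      obtain ⟨A₂, h2n, h2s, hy2⟩ := (SatAux.mem_UU G f).mp hy
      apply (SatAux.mem_UU G f).mpr
      refine ⟨{m | ∃ a₁ ∈ A₁, ∃ a₂ ∈ A₂, m = SatAux.meet G a₁ a₂ ∧ DGraph.Nontriv G m},
        ?_, ⟨?_, ?_⟩, ?_⟩
      · rintro m ⟨a₁, -, a₂, -, rfl, hm⟩
        exact hm
      · rintro m ⟨a₁, ha₁, a₂, ha₂, rfl, -⟩
        exact SatAux.aple_trans G (SatAux.meet_le_left G a₁ a₂) (h1s.1 a₁ ha₁)
      · intro R' hR'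
        apply h1s.2
        intro a₁ ha₁
        apply SatAux.distrib G h2s (h1s.1 a₁ ha₁)
        intro a₂ ha₂
        by_cases hm : DGraph.Nontriv G (SatAux.meet G a₁ a₂)
        · exact hR' _ ⟨a₁, ha₁, a₂, ha₂, rfl, hm⟩
        · exact SatAux.aple_of_trivial G hm
      · apply (SatAux.mem_biInf G f).mpr
        rintro m ⟨a₁, ha₁, a₂, ha₂, rfl, hm⟩
        refine (f _).add_mem ?_ ?_
        · exact hf _ a₁ hm (h1n a₁ ha₁) (SatAux.meet_le_left G a₁ a₂)
            ((SatAux.mem_biInf G f).mp hx1 a₁ ha₁)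
        · exact hf _ a₂ hm (h2n a₂ ha₂) (SatAux.meet_le_right G a₁ a₂)
            ((SatAux.mem_biInf G f).mp hy2 a₂ ha₂)
    · exact SatAux.f_subset_UU G f hP (f P).zero_mem
    · intro c x hx
      obtain ⟨A, hn, hs, hx1⟩ := (SatAux.mem_UU G f).mp hx
      exact (SatAux.mem_UU G f).mpr ⟨A, hn, hs, Submodule.smul_mem _ c hx1⟩
  choose Uide hUide using hUideal
  set h : DGraph.APair G → Ideal R :=
    fun P => if hp : DGraph.Nontriv G P then Uide P hp else ⊥ with hh
  have hcar : ∀ P (hP : DGraph.Nontriv G P), (h P : Set R) = SatAux.UU G f P := by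
    intro P hP
    rw [hh]
    simp only [dif_pos hP]
    exact hUide P hP
  have hmem : ∀ P (hP : DGraph.Nontriv G P) (x : R),
      x ∈ h P ↔ x ∈ SatAux.UU G f P := by
    intro P hP x
    rw [← SetLike.mem_coe, hcar P hP]
  have hSat : DGraph.SatFun G R h := by
    intro ι _ P' Q' hnP hnQ hsup
    apply le_antisymm
    · apply le_iInf
      intro i x hx
      rw [hmem Q' hnQ] at hx
      rw [hmem (P' i) (hnP i)]
      obtain ⟨A, hAn, hAs, hxA⟩ := (SatAux.mem_UU G f).mp hx
      apply (SatAux.mem_UU G f).mpr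
      refine ⟨{m | ∃ a ∈ A, m = SatAux.meet G (P' i) a ∧ DGraph.Nontriv G m},
        ?_, ⟨?_, ?_⟩, ?_⟩
      · rintro m ⟨a, -, rfl, hm⟩
        exact hm
      · rintro m ⟨a, ha, rfl, -⟩
        exact SatAux.meet_le_left G _ _
      · intro R' hR'
        apply SatAux.distrib G hAs (hsup.1 i)
        intro a ha
        by_cases hm : DGraph.Nontriv G (SatAux.meet G (P' i) a)
        · exact hR' _ ⟨a, ha, rfl, hm⟩
        · exact SatAux.aple_of_trivial G hm
      · apply (SatAux.mem_biInf G f).mpr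
        rintro m ⟨a, ha, rfl, hm⟩
        exact hf _ a hm (hAn a ha) (SatAux.meet_le_right G _ _)
          ((SatAux.mem_biInf G f).mp hxA a ha)
    · intro x hx
      rw [Submodule.mem_iInf] at hx
      rw [hmem Q' hnQ]
      have hch : ∀ i, ∃ A : Set (DGraph.APair G),
          (∀ P'' ∈ A, DGraph.Nontriv G P'') ∧ DGraph.IsSupSet G A (P' i) ∧
            x ∈ (⨅ P'' ∈ A, f P'' : Ideal R) := by
        intro i
        exact (SatAux.mem_UU G f).mp ((hmem (P' i) (hnP i) x).mp (hx i))
      choose Ai hAin hAis hAix using hch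
      apply (SatAux.mem_UU G f).mpr
      refine ⟨⋃ i, Ai i, ?_, ⟨?_, ?_⟩, ?_⟩
      · intro P'' hP''
        obtain ⟨i, hi⟩ := Set.mem_iUnion.mp hP''
        exact hAin i P'' hi
      · intro P'' hP''
        obtain ⟨i, hi⟩ := Set.mem_iUnion.mp hP''
        exact SatAux.aple_trans G ((hAis i).1 P'' hi) (hsup.1 i)
      · intro R' hR'
        apply hsup.2
        intro i
        exact (hAis i).2 R' (fun P'' hP'' => hR' P'' (Set.mem_iUnion.mpr ⟨i, hP''⟩))
      · apply (SatAux.mem_biInf G f).mpr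
        intro P'' hP''
        obtain ⟨i, hi⟩ := Set.mem_iUnion.mp hP''
        exact (SatAux.mem_biInf G f).mp (hAix i) P'' hi
  have hfh : ∀ P, DGraph.Nontriv G P → f P ≤ h P := by
    intro P hP x hx
    rw [hmem P hP]
    exact SatAux.f_subset_UU G f hP hx
  have hghU : (g Q : Set R) ⊆ SatAux.UU G f Q := by
    intro x hx
    rw [← hcar Q hQ]
    exact hmin h hSat hfh Q hQ hx
  have hUg : SatAux.UU G f Q ⊆ (g Q : Set R) := by
    intro x hx
    obtain ⟨A, hAn, hAs, hxA⟩ := (SatAux.mem_UU G f).mp hx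
    have hAne : A.Nonempty := by
      rcases Set.eq_empty_or_nonempty A with rfl | hne
      · exact (SatAux.triv_of_supset_empty G hAs hQ).elim
      · exact hne
    haveI : Nonempty A := hAne.to_subtype
    have hgq := hg A (fun i => i.1) Q (fun i => hAn i.1 i.2) hQ
      ⟨fun i => hAs.1 i.1 i.2, fun R' hR' => hAs.2 R' (fun P hP => hR' ⟨P, hP⟩)⟩
    rw [SetLike.mem_coe, hgq, Submodule.mem_iInf]
    intro i
    exact hge i.1 (hAn i.1 i.2) ((SatAux.mem_biInf G f).mp hxA i.1 i.2)
  exact subset_antisymm hghU hUg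
end

section
/- For any commutative ring R and any ideals I, J of the Laurent polynomial ring R[x,x⁻¹], one has (I ∩ R)(J ∩ R) ⊆ (IJ) ∩ R, but this containment can be strict: in R = ℂ[y,z]/(y², z²), for I = (y + zx⁻¹) and J = (z + yx) in R[x,x⁻¹], one has I ∩ R = J ∩ R = ℂ·yz, so (I∩R)(J∩R) = 0, while 2yz = (y+zx⁻¹)(z+yx) is a nonzero element of (IJ) ∩ R. -/
/-! The inclusion is `Ideal.le_comap_mul`. For the example, let `a² = b² = 0` and `k ≠ 0`. If a
constant `r` equals `f · (a + b xᵏ)`, the coefficients of `x⁰`, `xᵏ` and `x⁻ᵏ` give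
`r = f₀ a + f₋ₖ b`, `f₀ b = -fₖ a` and `f₋ₖ a = -f₋₂ₖ b`, so `r a = f₋ₖ ab = 0` and
`r b = f₀ ab = 0`; conversely `ab = b · (a + b xᵏ)`. In `ℂ[y,z]/(y², z²)` the common annihilator
of `y` and `z` is `(yz)`, as one reads off from the monomials of the monomial ideals `(y², z²)`
and `(yz, y², z²)`. Finally `(y + z x⁻¹)(z + y x) = 2yz` because `y² = z² = 0`. -/

noncomputable section

open LaurentPolynomial

/-- The ring `ℂ[y,z]/(y², z²)`. -/
abbrev RCounter : Type :=
  MvPolynomial (Fin 2) ℂ ⧸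
    Ideal.span ({(MvPolynomial.X 0 : MvPolynomial (Fin 2) ℂ) ^ 2,
      (MvPolynomial.X 1 : MvPolynomial (Fin 2) ℂ) ^ 2} : Set (MvPolynomial (Fin 2) ℂ))

/-- The image of `y` in `ℂ[y,z]/(y²,z²)`. -/
def yy : RCounter := Ideal.Quotient.mk _ (MvPolynomial.X 0)

/-- The image of `z` in `ℂ[y,z]/(y²,z²)`. -/
def zz : RCounter := Ideal.Quotient.mk _ (MvPolynomial.X 1)

/-- The ideal `I = (y + z x⁻¹)` of `R[x,x⁻¹]` for `R = ℂ[y,z]/(y²,z²)`. -/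
def Iex : Ideal (LaurentPolynomial RCounter) :=
  Ideal.span {LaurentPolynomial.C yy + LaurentPolynomial.C zz * LaurentPolynomial.T (-1)}

/-- The ideal `J = (z + y x)` of `R[x,x⁻¹]` for `R = ℂ[y,z]/(y²,z²)`. -/
def Jex : Ideal (LaurentPolynomial RCounter) :=
  Ideal.span {LaurentPolynomial.C zz + LaurentPolynomial.C yy * LaurentPolynomial.T 1}

namespace MvPolynomial
variable {σ R : Type*} [CommSemiring R]

theorem mem_span_X_pow_X_pow_iff (i j : σ) (a b : ℕ) {p : MvPolynomial σ R} :
    p ∈ Ideal.span {X i ^ a, X j ^ b} ↔ ∀ m ∈ p.support, a ≤ m i ∨ b ≤ m j := by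
  have : ({X i ^ a, X j ^ b} : Set (MvPolynomial σ R)) =
      (fun s => monomial s (1 : R)) '' {Finsupp.single i a, Finsupp.single j b} := by
    simp [Set.image_pair, X_pow_eq_monomial]
  simp [this, mem_ideal_span_monomial_image, Finsupp.single_le_iff]

theorem mem_span_X_mul_X_X_sq_X_sq_iff {i j : σ} (hij : i ≠ j) {p : MvPolynomial σ R} :
    p ∈ Ideal.span {X i * X j, X i ^ 2, X j ^ 2} ↔
      ∀ m ∈ p.support, (1 ≤ m i ∧ 1 ≤ m j) ∨ 2 ≤ m i ∨ 2 ≤ m j := by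
  have hmon : ({X i * X j, X i ^ 2, X j ^ 2} : Set (MvPolynomial σ R)) =
      (fun s => monomial s (1 : R)) ''
        {Finsupp.single i 1 + Finsupp.single j 1, Finsupp.single i 2, Finsupp.single j 2} := by
    rw [Set.image_insert_eq, Set.image_pair, X_pow_eq_monomial, X_pow_eq_monomial, X, X,
      monomial_mul, one_mul]
  have hle (m : σ →₀ ℕ) : Finsupp.single i 1 + Finsupp.single j 1 ≤ m ↔ 1 ≤ m i ∧ 1 ≤ m j := by
    rw [Finsupp.le_def]
    refine ⟨fun h => ⟨by simpa [hij] using h i, by simpa [hij.symm] using h j⟩, ?_⟩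
    rintro ⟨hi, hj⟩ k
    rcases eq_or_ne k i with rfl | hki
    · simpa [hij] using hi
    rcases eq_or_ne k j with rfl | hkj
    · simpa [hki] using hj
    simp [hki.symm, hkj.symm]
  simp [hmon, mem_ideal_span_monomial_image, Finsupp.single_le_iff, hle]

end MvPolynomial

namespace LaurentPolynomial
variable {R : Type*} [CommRing R]

theorem coeff_mul_C_add_C_mul_T (f : R[T;T⁻¹]) (a b : R) (k n : ℤ) :
    (f * (C a + C b * T k)).coeff n = f.coeff n * a + f.coeff (n - k) * b := by
  rw [← single_eq_C, ← single_eq_C_mul_T, mul_add, AddMonoidAlgebra.coeff_add, Finsupp.add_apply,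
    AddMonoidAlgebra.coeff_mul_single_apply, AddMonoidAlgebra.coeff_mul_single_apply, neg_zero,
    add_zero, ← sub_eq_add_neg]

theorem mul_eq_zero_of_C_mem_span_C_add_C_mul_T {a b r : R} (ha : a * a = 0) (hb : b * b = 0)
    {k : ℤ} (hk : k ≠ 0) (hr : C r ∈ Ideal.span {C a + C b * T k}) : r * a = 0 ∧ r * b = 0 := by
  obtain ⟨f, hf⟩ := Ideal.mem_span_singleton'.1 hr
  have hcoeff (n : ℤ) : f.coeff n * a + f.coeff (n - k) * b = if n = 0 then r else 0 := by
    rw [← coeff_mul_C_add_C_mul_T, hf, C_apply]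
  have h0 := hcoeff 0
  have hpos := hcoeff k
  have hneg := hcoeff (-k)
  simp only [if_pos, if_neg hk, if_neg (neg_ne_zero.2 hk), sub_self, zero_sub] at h0 hpos hneg
  constructor
  · linear_combination (-a) * h0 + f.coeff 0 * ha + b * hneg - f.coeff (-k - k) * hb
  · linear_combination (-b) * h0 + f.coeff (-k) * hb + a * hpos - f.coeff k * ha

theorem C_mul_mem_span_C_add_C_mul_T {b : R} (hb : b * b = 0) (a : R) (k : ℤ) :
    C (a * b) ∈ Ideal.span {C a + C b * T k} :=
  have hCb : C b * C b = (0 : R[T;T⁻¹]) := by rw [← map_mul, hb, map_zero]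
  Ideal.mem_span_singleton'.2 ⟨C b, by rw [map_mul]; linear_combination (T k) * hCb⟩

theorem comap_C_span_C_add_C_mul_T {a b : R} (ha : a * a = 0) (hb : b * b = 0) {k : ℤ}
    (hk : k ≠ 0)
    (hann : ∀ r, r * a = 0 → r * b = 0 → r ∈ Ideal.span {a * b}) :
    (Ideal.span {C a + C b * T k}).comap C = Ideal.span {a * b} := by
  refine le_antisymm (fun r hr => ?_) ?_
  · obtain ⟨hra, hrb⟩ := mul_eq_zero_of_C_mem_span_C_add_C_mul_T ha hb hk hr
    exact hann r hra hrb
  · rw [Ideal.span_le, Set.singleton_subset_iff]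
    exact C_mul_mem_span_C_add_C_mul_T hb a k

theorem C_add_C_mul_T_neg_mul_C_add_C_mul_T {a b : R} (ha : a * a = 0) (hb : b * b = 0) (k : ℤ) :
    (C a + C b * T (-k)) * (C b + C a * T k) = C (2 * (a * b)) := by
  have hCa : C a * C a = (0 : R[T;T⁻¹]) := by rw [← map_mul, ha, map_zero]
  have hCb : C b * C b = (0 : R[T;T⁻¹]) := by rw [← map_mul, hb, map_zero]
  have hT : T (-k) * T k = (1 : R[T;T⁻¹]) := by rw [← T_add, neg_add_cancel, T_zero]
  rw [map_mul, map_mul, map_ofNat]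
  linear_combination T k * hCa + T (-k) * hCb + C b * C a * hT

end LaurentPolynomial

namespace RCounter
open MvPolynomial

theorem mk_eq_zero_iff {p : MvPolynomial (Fin 2) ℂ} :
    (Ideal.Quotient.mk _ p : RCounter) = 0 ↔ ∀ m ∈ p.support, 2 ≤ m 0 ∨ 2 ≤ m 1 :=
  Ideal.Quotient.eq_zero_iff_mem.trans (mem_span_X_pow_X_pow_iff 0 1 2 2)

theorem yy_mul_self : yy * yy = 0 := by
  rw [yy, ← map_mul, mk_eq_zero_iff]
  simp [← pow_two, X_pow_eq_monomial, support_monomial]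

theorem zz_mul_self : zz * zz = 0 := by
  rw [zz, ← map_mul, mk_eq_zero_iff]
  simp [← pow_two, X_pow_eq_monomial, support_monomial]

theorem two_mul_yy_mul_zz_ne_zero : 2 * (yy * zz) ≠ 0 := by
  have : 2 * (yy * zz) =
      Ideal.Quotient.mk _ (monomial (Finsupp.single 0 1 + Finsupp.single 1 1) 2) := by
    rw [show (2 : ℂ) = 2 * (1 * 1) by norm_num, ← C_mul_monomial, ← monomial_mul, ← X, ← X,
      map_mul, map_mul, map_ofNat MvPolynomial.C, map_ofNat, yy, zz]
  rw [this, Ne, mk_eq_zero_iff, support_monomial, if_neg two_ne_zero]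
  simp

theorem mem_span_yy_mul_zz_of_mul_eq_zero {r : RCounter} (hy : r * yy = 0) (hz : r * zz = 0) :
    r ∈ Ideal.span {yy * zz} := by
  obtain ⟨p, rfl⟩ := Ideal.Quotient.mk_surjective r
  rw [yy, ← map_mul, mk_eq_zero_iff, support_mul_X, Finset.forall_mem_map] at hy
  rw [zz, ← map_mul, mk_eq_zero_iff, support_mul_X, Finset.forall_mem_map] at hz
  have hp : p ∈ Ideal.span {X 0 * X 1, X 0 ^ 2, X 1 ^ 2} :=
    (mem_span_X_mul_X_X_sq_X_sq_iff (by decide)).2 fun m hm => by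
      have hm0 := hy m hm
      have hm1 := hz m hm
      simp only [addRightEmbedding_apply, Finsupp.add_apply, Finsupp.single_eq_same,
        Finsupp.single_eq_of_ne, ne_eq, zero_ne_one, one_ne_zero, not_false_eq_true,
        add_zero] at hm0 hm1
      omega
  obtain ⟨a, q, hq, rfl⟩ := Ideal.mem_span_insert.1 hp
  rw [Ideal.mem_span_singleton]
  refine ⟨Ideal.Quotient.mk _ a, ?_⟩
  rw [map_add, Ideal.Quotient.eq_zero_iff_mem.2 hq, add_zero, map_mul, map_mul, yy, zz, mul_comm]

end RCounter

/-- for any commutative ring `R` and ideals `I, J` of `R[x,x⁻¹]`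
one has `(I ∩ R)(J ∩ R) ⊆ (IJ) ∩ R`, but the containment can be strict: in
`R = ℂ[y,z]/(y²,z²)` with `I = (y + zx⁻¹)` and `J = (z + yx)` one has
`I ∩ R = J ∩ R = ℂ·yz = (yz)`, so `(I∩R)(J∩R) = 0`, while `2yz` is a nonzero
element of `(IJ) ∩ R`. -/
theorem contraction_product_subset_and_strict :
    (∀ (R : Type) [CommRing R] (I J : Ideal (LaurentPolynomial R)),
      Ideal.comap (LaurentPolynomial.C : R →+* LaurentPolynomial R) I *
          Ideal.comap (LaurentPolynomial.C : R →+* LaurentPolynomial R) J ≤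
        Ideal.comap (LaurentPolynomial.C : R →+* LaurentPolynomial R) (I * J)) ∧
    Ideal.comap (LaurentPolynomial.C : RCounter →+* LaurentPolynomial RCounter) Iex =
      Ideal.span {yy * zz} ∧
    Ideal.comap (LaurentPolynomial.C : RCounter →+* LaurentPolynomial RCounter) Jex =
      Ideal.span {yy * zz} ∧
    Ideal.comap (LaurentPolynomial.C : RCounter →+* LaurentPolynomial RCounter) Iex *
        Ideal.comap (LaurentPolynomial.C : RCounter →+* LaurentPolynomial RCounter) Jex = ⊥ ∧
    2 * (yy * zz) ∈
      Ideal.comap (LaurentPolynomial.C : RCounter →+* LaurentPolynomial RCounter) (Iex * Jex) ∧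
    2 * (yy * zz) ≠ 0 := by
  have hI : Iex.comap C = Ideal.span {yy * zz} :=
    comap_C_span_C_add_C_mul_T RCounter.yy_mul_self RCounter.zz_mul_self (by norm_num) fun _ =>
      RCounter.mem_span_yy_mul_zz_of_mul_eq_zero
  have hJ : Jex.comap C = Ideal.span {yy * zz} := by
    rw [mul_comm]
    exact comap_C_span_C_add_C_mul_T RCounter.zz_mul_self RCounter.yy_mul_self one_ne_zero
      fun _ hz hy => mul_comm yy zz ▸ RCounter.mem_span_yy_mul_zz_of_mul_eq_zero hy hz
  refine ⟨fun R _ I J => Ideal.le_comap_mul C, hI, hJ, ?_, ?_, RCounter.two_mul_yy_mul_zz_ne_zero⟩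
  · rw [hI, hJ, Ideal.span_singleton_mul_span_singleton, Ideal.span_singleton_eq_bot]
    linear_combination zz * zz * RCounter.yy_mul_self
  · rw [Ideal.mem_comap,
      ← C_add_C_mul_T_neg_mul_C_add_C_mul_T RCounter.yy_mul_self RCounter.zz_mul_self 1]
    exact Ideal.mul_mem_mul (Ideal.mem_span_singleton_self _) (Ideal.mem_span_singleton_self _)

end
end
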